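/- arXiv:2011.09415 — 3 statements merged into one kernel-verified Lean document; each statement's English description precedes it below -/
import Mathlib

section
/- Let n ≥ 1 be an integer. Then the Laurent polynomial P(n) has highest exponent h(P(n)) = 3n+2, where the coefficient of A^{3n+2} is (−1)^n, and lowest exponent ℓ(P(n)) = −n−6, where the coefficient of A^{−n−6} is 1. Similarly, P̄(n) has highest exponent h(P̄(n)) = n+6 with coefficient 1, and lowest exponent ℓ(P̄(n)) = −3n−2 with coefficient (−1)^n. Consequently the product P(n)·P̄(n) has highest exponent 4n+8 and lowest exponent −4n−8. -/
open LaurentPolynomial Finset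

/-- The coefficient of `A^k` in the Laurent polynomial `y ∈ ℤ[A,A⁻¹]`. -/
noncomputable def coeffA (y : LaurentPolynomial ℤ) (k : ℤ) : ℤ := y.coeff k

/-- `y` has highest exponent `d`, with coefficient `c` (nonzero) on `A^d`. -/
def HiCoeff (y : LaurentPolynomial ℤ) (d c : ℤ) : Prop :=
  coeffA y d = c ∧ c ≠ 0 ∧ ∀ k, d < k → coeffA y k = 0

/-- `y` has lowest exponent `d`, with coefficient `c` (nonzero) on `A^d`. -/
def LoCoeff (y : LaurentPolynomial ℤ) (d c : ℤ) : Prop :=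
  coeffA y d = c ∧ c ≠ 0 ∧ ∀ k, k < d → coeffA y k = 0

/-- `y` has highest exponent `d`: `h(y) = d`. -/
def IsHi (y : LaurentPolynomial ℤ) (d : ℤ) : Prop :=
  coeffA y d ≠ 0 ∧ ∀ k, d < k → coeffA y k = 0

/-- `y` has lowest exponent `d`: `ℓ(y) = d`. -/
def IsLo (y : LaurentPolynomial ℤ) (d : ℤ) : Prop :=
  coeffA y d ≠ 0 ∧ ∀ k, k < d → coeffA y k = 0

/-- P(n) = A^{−n−6} + (A⁴+A⁻⁴)·Σ_{k=1}^{n} (−1)^k A^{4k−n−2} -/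
noncomputable def P (n : ℕ) : LaurentPolynomial ℤ :=
  T (-(n:ℤ) - 6) +
    (T 4 + T (-4)) * ∑ k ∈ Finset.Icc 1 n, (-1 : LaurentPolynomial ℤ)^k * T (4*(k:ℤ) - n - 2)

/-- P̄(n) = A^{n+6} + (A⁴+A⁻⁴)·Σ_{k=1}^{n} (−1)^k A^{−4k+n+2} -/
noncomputable def Pbar (n : ℕ) : LaurentPolynomial ℤ :=
  T ((n:ℤ) + 6) +
    (T 4 + T (-4)) * ∑ k ∈ Finset.Icc 1 n, (-1 : LaurentPolynomial ℤ)^k * T (-4*(k:ℤ) + n + 2)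

/-- Q(j) = −A^{2−j} + Σ_{k=0}^{j} (−1)^{k+1} A^{4k−j−2} -/
noncomputable def Q (j : ℕ) : LaurentPolynomial ℤ :=
  -T (2 - (j:ℤ)) + ∑ k ∈ Finset.range (j+1), (-1 : LaurentPolynomial ℤ)^(k+1) * T (4*(k:ℤ) - j - 2)

/-- N(j) = (−A⁶−A⁻⁶)·(−A³)^j + (−A⁴−A⁻⁴+2)·Q(j) -/
noncomputable def N (j : ℕ) : LaurentPolynomial ℤ :=
  (-T 6 - T (-6)) * (-T 3)^j + (-T 4 - T (-4) + 2) * Q j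

/-- R(m) = A^{−m−5} + (A⁴+A⁻⁴)·Σ_{k=1}^{m−1} (−1)^k A^{4k−m−1} -/
noncomputable def Rm (m : ℕ) : LaurentPolynomial ℤ :=
  T (-(m:ℤ) - 5) +
    (T 4 + T (-4)) * ∑ k ∈ Finset.Icc 1 (m-1), (-1 : LaurentPolynomial ℤ)^k * T (4*(k:ℤ) - m - 1)

/-!
Write `P n = A^{-n-6} + (A⁴ + A⁻⁴)·Psum n`. The alternating sum `Psum n` has extreme terms
`(-1)^n A^{3n-2}` and `-A^{2-n}`; multiplying by `A⁴ + A⁻⁴` moves them to `A^{3n+2}` and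
`A^{-n-2}`, and the lone monomial `A^{-n-6}` sits strictly below. `P̄(n)` is `P(n)` under
`A ↦ A⁻¹`, which mirrors the extremes. Over the domain `ℤ`, the extreme terms of a product are
the products of the extreme terms.
-/

namespace LaurentPolynomial

variable {R : Type*} [Semiring R] {p q : R[T;T⁻¹]} {d e : ℤ}

theorem le_of_mem_support_coeff (hp : ∀ k, d < k → p.coeff k = 0) {a : ℤ}
    (ha : a ∈ p.coeff.support) : a ≤ d :=
  not_lt.1 (mt (hp a) (Finsupp.mem_support_iff.1 ha))

theorem coeff_mul_add_of_coeff_eq_zero_of_lt (hp : ∀ k, d < k → p.coeff k = 0)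
    (hq : ∀ k, e < k → q.coeff k = 0) : (p * q).coeff (d + e) = p.coeff d * q.coeff e := by
  refine AddMonoidAlgebra.coeff_mul_add_of_uniqueAdd fun a b ha hb hab => ?_
  have := le_of_mem_support_coeff hp ha
  have := le_of_mem_support_coeff hq hb
  omega

theorem coeff_mul_eq_zero_of_add_lt (hp : ∀ k, d < k → p.coeff k = 0)
    (hq : ∀ k, e < k → q.coeff k = 0) {k : ℤ} (hk : d + e < k) : (p * q).coeff k = 0 := by
  classical
  by_contra hne
  obtain ⟨a, ha, b, hb, rfl⟩ :=
    Finset.mem_add.1 (AddMonoidAlgebra.support_coeff_mul_subset p q (Finsupp.mem_support_iff.2 hne))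
  have := le_of_mem_support_coeff hp ha
  have := le_of_mem_support_coeff hq hb
  omega

end LaurentPolynomial

theorem LaurentPolynomial.coeff_neg_one_pow_mul_T {R : Type*} [Ring R] (k : ℕ) (e m : ℤ) :
    ((-1 : R[T;T⁻¹]) ^ k * T e).coeff m = if e = m then (-1) ^ k else 0 := by
  by_cases hem : e = m <;> rcases Nat.even_or_odd k with h | h <;> simp [h.neg_one_pow, hem]

theorem coeffA_add (p q : LaurentPolynomial ℤ) (k : ℤ) :
    coeffA (p + q) k = coeffA p k + coeffA q k :=
  rfl

section Extremes

variable {p q : LaurentPolynomial ℤ} {d e c c' : ℤ}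

theorem HiCoeff.mul (hp : HiCoeff p d c) (hq : HiCoeff q e c') :
    HiCoeff (p * q) (d + e) (c * c') :=
  ⟨(coeff_mul_add_of_coeff_eq_zero_of_lt hp.2.2 hq.2.2).trans (by rw [← hp.1, ← hq.1]; rfl),
    mul_ne_zero hp.2.1 hq.2.1, fun _ hk => coeff_mul_eq_zero_of_add_lt hp.2.2 hq.2.2 hk⟩

theorem HiCoeff.isHi (h : HiCoeff p d c) : IsHi p d := ⟨h.1 ▸ h.2.1, h.2.2⟩

theorem LoCoeff.isLo (h : LoCoeff p d c) : IsLo p d := ⟨h.1 ▸ h.2.1, h.2.2⟩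

theorem hiCoeff_invert_iff : HiCoeff (invert p) (-d) c ↔ LoCoeff p d c := by
  simp only [HiCoeff, LoCoeff, coeffA, invert_apply, neg_neg]
  refine and_congr Iff.rfl (and_congr Iff.rfl ⟨fun h k hk => ?_, fun h k hk => h (-k) (by omega)⟩)
  simpa using h (-k) (by omega)

theorem loCoeff_invert_iff : LoCoeff (invert p) (-d) c ↔ HiCoeff p d c := by
  rw [← hiCoeff_invert_iff, neg_neg, involutive_invert p]

theorem LoCoeff.mul (hp : LoCoeff p d c) (hq : LoCoeff q e c') :
    LoCoeff (p * q) (d + e) (c * c') := by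
  rw [← hiCoeff_invert_iff, map_mul, neg_add]
  exact (hiCoeff_invert_iff.2 hp).mul (hiCoeff_invert_iff.2 hq)

theorem HiCoeff.add_of_lt (hp : HiCoeff p d c) (hq : ∀ k, e < k → coeffA q k = 0)
    (hed : e < d) : HiCoeff (p + q) d c :=
  ⟨by rw [coeffA_add, hp.1, hq d hed, add_zero], hp.2.1,
    fun k hk => by rw [coeffA_add, hp.2.2 k hk, hq k (hed.trans hk), add_zero]⟩

theorem LoCoeff.add_of_lt (hp : LoCoeff p d c) (hq : ∀ k, k < e → coeffA q k = 0)
    (hde : d < e) : LoCoeff (p + q) d c :=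
  ⟨by rw [coeffA_add, hp.1, hq d hde, add_zero], hp.2.1,
    fun k hk => by rw [coeffA_add, hp.2.2 k hk, hq k (hk.trans hde), add_zero]⟩

theorem hiCoeff_T (d : ℤ) : HiCoeff (T d) d 1 :=
  ⟨by simp [coeffA], one_ne_zero, fun k hk => by simp [coeffA, hk.ne]⟩

theorem loCoeff_T (d : ℤ) : LoCoeff (T d) d 1 :=
  ⟨by simp [coeffA], one_ne_zero, fun k hk => by simp [coeffA, hk.ne']⟩

theorem hiCoeff_T_add_T_neg (hd : 0 < d) : HiCoeff (T d + T (-d)) d 1 :=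
  (hiCoeff_T d).add_of_lt (hiCoeff_T (-d)).2.2 (by omega)

theorem loCoeff_T_add_T_neg (hd : 0 < d) : LoCoeff (T d + T (-d)) (-d) 1 := by
  rw [add_comm]
  exact (loCoeff_T (-d)).add_of_lt (loCoeff_T d).2.2 (by omega)

end Extremes

noncomputable def Psum (n : ℕ) : LaurentPolynomial ℤ :=
  ∑ k ∈ Finset.Icc 1 n, (-1 : LaurentPolynomial ℤ)^k * T (4*(k:ℤ) - n - 2)

theorem P_eq_T_add_mul_Psum (n : ℕ) : P n = T (-(n:ℤ) - 6) + (T 4 + T (-4)) * Psum n := rfl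

theorem coeffA_Psum (n : ℕ) (m : ℤ) :
    coeffA (Psum n) m = ∑ k ∈ Finset.Icc 1 n, if 4*(k:ℤ) - n - 2 = m then (-1)^k else 0 := by
  simp [Psum, coeffA, coeff_neg_one_pow_mul_T]

theorem hiCoeff_Psum {n : ℕ} (hn : 1 ≤ n) : HiCoeff (Psum n) (3*(n:ℤ) - 2) ((-1)^n) := by
  refine ⟨?_, by simp, fun m hm => ?_⟩
  · rw [coeffA_Psum, sum_eq_single n (fun k hk hkn => if_neg ?_) (by simp [hn]), if_pos (by ring)]
    simp only [mem_Icc] at hk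
    omega
  · refine (coeffA_Psum n m).trans (sum_eq_zero fun k hk => if_neg ?_)
    simp only [mem_Icc] at hk
    omega

theorem loCoeff_Psum {n : ℕ} (hn : 1 ≤ n) : LoCoeff (Psum n) (2 - (n:ℤ)) (-1) := by
  refine ⟨?_, by simp, fun m hm => ?_⟩
  · rw [coeffA_Psum, sum_eq_single 1 (fun k hk hk1 => if_neg ?_) (by simp [hn]), if_pos (by ring)]
    · simp
    simp only [mem_Icc] at hk
    omega
  · refine (coeffA_Psum n m).trans (sum_eq_zero fun k hk => if_neg ?_)
    simp only [mem_Icc] at hk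
    omega

theorem hiCoeff_P {n : ℕ} (hn : 1 ≤ n) : HiCoeff (P n) (3*(n:ℤ) + 2) ((-1)^n) := by
  have h := (hiCoeff_T_add_T_neg four_pos).mul (hiCoeff_Psum hn)
  rw [one_mul, show (4 : ℤ) + (3*n - 2) = 3*n + 2 by ring] at h
  rw [P_eq_T_add_mul_Psum, add_comm]
  exact h.add_of_lt (hiCoeff_T _).2.2 (by omega)

theorem loCoeff_P (n : ℕ) : LoCoeff (P n) (-(n:ℤ) - 6) 1 := by
  rcases Nat.eq_zero_or_pos n with rfl | hn
  · simpa [P] using loCoeff_T (-6)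
  have h := (loCoeff_T_add_T_neg four_pos).mul (loCoeff_Psum hn)
  exact (loCoeff_T _).add_of_lt h.2.2 (by omega)

theorem Pbar_eq_invert (n : ℕ) : Pbar n = invert (P n) := by
  simp only [P, Pbar, map_add, map_mul, map_sum, map_pow, map_neg, map_one, invert_T]
  exact congr_arg₂ (· + ·) (congr_arg T (by ring)) <| congr_arg₂ (· * ·) (add_comm _ _) <|
    sum_congr rfl fun k _ => congr_arg _ (congr_arg T (by ring))

theorem hiCoeff_Pbar (n : ℕ) : HiCoeff (Pbar n) ((n:ℤ) + 6) 1 := by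
  rw [Pbar_eq_invert, show (n:ℤ) + 6 = -(-(n:ℤ) - 6) by ring, hiCoeff_invert_iff]
  exact loCoeff_P n

theorem loCoeff_Pbar {n : ℕ} (hn : 1 ≤ n) : LoCoeff (Pbar n) (-3*(n:ℤ) - 2) ((-1)^n) := by
  rw [Pbar_eq_invert, show -3*(n:ℤ) - 2 = -(3*(n:ℤ) + 2) by ring, loCoeff_invert_iff]
  exact hiCoeff_P hn

/-- extreme exponents and coefficients of P(n), P̄(n), and their product. -/
theorem stmt_0 (n : ℕ) (hn : 1 ≤ n) :
    HiCoeff (P n) (3*(n:ℤ) + 2) ((-1)^n) ∧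
    LoCoeff (P n) (-(n:ℤ) - 6) 1 ∧
    HiCoeff (Pbar n) ((n:ℤ) + 6) 1 ∧
    LoCoeff (Pbar n) (-3*(n:ℤ) - 2) ((-1)^n) ∧
    IsHi (P n * Pbar n) (4*(n:ℤ) + 8) ∧
    IsLo (P n * Pbar n) (-4*(n:ℤ) - 8) := by
  have hiP := hiCoeff_P hn
  have loP := loCoeff_P n
  have hiPbar := hiCoeff_Pbar n
  have loPbar := loCoeff_Pbar hn
  refine ⟨hiP, loP, hiPbar, loPbar, ?_, ?_⟩
  · rw [show 4*(n:ℤ) + 8 = (3*n + 2) + (n + 6) by ring]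
    exact (hiP.mul hiPbar).isHi
  · rw [show -4*(n:ℤ) - 8 = (-n - 6) + (-3*n - 2) by ring]
    exact (loP.mul loPbar).isLo
end

section
/- Let m ≥ 2 be an integer and set W(m) = (−A⁶−A⁻⁶)·N(m) + (−A⁴−A⁻⁴+2)·A⁻⁶·R(m) in ℤ[A, A⁻¹]. Then h(W(m)) = 3m+12 and ℓ(W(m)) = −m−15, so that span(W(m)) = 4m+27; in particular span(W(m)) > 16. -/
open LaurentPolynomial Finset

/-! Write `W(m) = X + Y + Z` with `X = (A⁶+A⁻⁶)²(−A³)^m`, `Y = (A⁶+A⁻⁶)(A⁴+A⁻⁴−2)Q(m)` and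
`Z = (−A⁴−A⁻⁴+2)A⁻⁶R(m)`, and track only the range of exponents of each factor. Then `X` lives in
`[3m−12, 3m+12]` with top coefficient `(−1)^m`, `Y` in `[−m−12, 3m+8]` (as soon as `m ≥ 1`), and
`Z` in `[−m−15, 3m−3]` with bottom coefficient `−1`, coming from `−A⁻⁴ · A⁻⁶ · A^{−m−5}`. Hence the
top term of `W` is that of `X` and the bottom term is that of `Z`. -/

namespace LaurentPolynomial

variable {R : Type*}

section Semiring

variable [Semiring R]

def SupportedIn (f : R[T;T⁻¹]) (a b : ℤ) : Prop := f.coeff.support ⊆ Icc a b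

theorem supportedIn_T (n : ℤ) : SupportedIn (T n : R[T;T⁻¹]) n n := by
  classical
  intro k hk
  rw [Finsupp.mem_support_iff, T_apply] at hk
  simp_all

theorem supportedIn_T_add_T_neg {n : ℤ} (hn : 0 ≤ n) :
    SupportedIn (T n + T (-n) : R[T;T⁻¹]) (-n) n := by
  classical
  intro k hk
  have := Finsupp.support_add hk
  simp_all [Finsupp.mem_support_iff, T_apply]
  omega

namespace SupportedIn

variable {f g : R[T;T⁻¹]} {a b c d : ℤ}

theorem coeff_eq_zero (hf : SupportedIn f a b) {k : ℤ} (hk : k < a ∨ b < k) : f.coeff k = 0 :=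
  Finsupp.notMem_support_iff.mp fun h => by have := mem_Icc.mp (hf h); omega

theorem mono (hf : SupportedIn f a b) (hc : c ≤ a) (hd : b ≤ d) : SupportedIn f c d :=
  hf.trans (Icc_subset_Icc hc hd)

theorem add (hf : SupportedIn f a b) (hg : SupportedIn g c d) :
    SupportedIn (f + g) (min a c) (max b d) := by
  classical
  exact Finsupp.support_add.trans (union_subset (hf.mono (min_le_left a c) (le_max_left b d))
    (hg.mono (min_le_right a c) (le_max_right b d)))

theorem sum {ι : Type*} {s : Finset ι} {f : ι → R[T;T⁻¹]} (hf : ∀ i ∈ s, SupportedIn (f i) a b) :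
    SupportedIn (∑ i ∈ s, f i) a b := by
  classical
  rw [SupportedIn, AddMonoidAlgebra.coeff_sum]
  exact Finsupp.support_finsetSum.trans (biUnion_subset.mpr hf)

theorem mul (hf : SupportedIn f a b) (hg : SupportedIn g c d) :
    SupportedIn (f * g) (a + c) (b + d) := by
  classical
  exact (AddMonoidAlgebra.support_coeff_mul_subset f g).trans
    ((add_subset_add hf hg).trans (Icc_add_Icc_subset a b c d))

theorem pow (hf : SupportedIn f a b) (n : ℕ) : SupportedIn (f ^ n) (n * a) (n * b) := by
  induction n with
  | zero => simpa [← T_zero] using supportedIn_T (R := R) 0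
  | succ n ih => simpa [pow_succ, add_mul] using ih.mul hf

theorem coeff_mul_top (hf : SupportedIn f a b) (hg : SupportedIn g c d) :
    (f * g).coeff (b + d) = f.coeff b * g.coeff d := by
  classical
  have hle {h : R[T;T⁻¹]} {lo hi k : ℤ} (hh : SupportedIn h lo hi) (hk : k ∈ h.coeff.support) :
      k ≤ hi :=
    (mem_Icc.mp (hh hk)).2
  simp only [AddMonoidAlgebra.coeff_mul, Finsupp.sum]
  rw [Finset.sum_eq_single b, Finset.sum_eq_single d, if_pos rfl]
  · exact fun k hk hne => if_neg (by have := hle hg hk; omega)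
  · exact fun hd => by rw [Finsupp.notMem_support_iff.mp hd, mul_zero, ite_self]
  · exact fun k hk hne => Finset.sum_eq_zero fun l hl =>
      if_neg (by have := hle hf hk; have := hle hg hl; omega)
  · exact fun hb => Finset.sum_eq_zero fun l _ => by
      rw [Finsupp.notMem_support_iff.mp hb, zero_mul, ite_self]

theorem coeff_pow_top (hf : SupportedIn f a b) (n : ℕ) : (f ^ n).coeff (n * b) = f.coeff b ^ n := by
  induction n with
  | zero => simp [← T_zero]
  | succ n ih => rw [pow_succ, pow_succ, ← ih, ← (hf.pow n).coeff_mul_top hf]; push_cast; ring_nf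

end SupportedIn

end Semiring

section Ring

variable [Ring R] {f : R[T;T⁻¹]} {a b : ℤ}

theorem SupportedIn.neg (hf : SupportedIn f a b) : SupportedIn (-f) a b := by
  rwa [SupportedIn, AddMonoidAlgebra.coeff_neg, Finsupp.support_neg]

theorem supportedIn_neg_one_pow_mul_T (k : ℕ) (e : ℤ) :
    SupportedIn ((-1 : R[T;T⁻¹]) ^ k * T e) e e := by
  simpa [← T_zero] using ((supportedIn_T (R := R) 0).neg.pow k).mul (supportedIn_T e)

theorem supportedIn_neg_T_sub_T_neg {n : ℤ} (hn : 0 ≤ n) :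
    SupportedIn (-T n - T (-n) : R[T;T⁻¹]) (-n) n := by
  rw [← neg_add']; exact (supportedIn_T_add_T_neg hn).neg

theorem supportedIn_neg_T_sub_T_neg_add_two {n : ℤ} (hn : 0 ≤ n) :
    SupportedIn (-T n - T (-n) + 2 : R[T;T⁻¹]) (-n) n := by
  rw [← one_add_one_eq_two, ← T_zero]
  exact ((supportedIn_neg_T_sub_T_neg hn).add
    ((supportedIn_T 0).add (supportedIn_T 0))).mono (by omega) (by omega)

end Ring

section CommSemiring

variable [CommSemiring R] {f g : R[T;T⁻¹]} {a b c d : ℤ}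

theorem SupportedIn.invert (hf : SupportedIn f a b) : SupportedIn (invert f) (-b) (-a) := by
  intro k hk
  rw [Finsupp.mem_support_iff, invert_apply] at hk
  have := mem_Icc.mp (hf (Finsupp.mem_support_iff.mpr hk))
  exact mem_Icc.mpr ⟨by omega, by omega⟩

theorem SupportedIn.coeff_mul_bot (hf : SupportedIn f a b) (hg : SupportedIn g c d) :
    (f * g).coeff (a + c) = f.coeff a * g.coeff c := by
  have h := hf.invert.coeff_mul_top hg.invert
  rwa [← map_mul, invert_apply, invert_apply, invert_apply, neg_neg, neg_neg, ← neg_add,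
    neg_neg] at h

end CommSemiring

variable {f : ℤ[T;T⁻¹]} {a b : ℤ}

theorem SupportedIn.isHi (hf : SupportedIn f a b) (hb : f.coeff b ≠ 0) : IsHi f b :=
  ⟨hb, fun _ hk => hf.coeff_eq_zero (Or.inr hk)⟩

theorem SupportedIn.isLo (hf : SupportedIn f a b) (ha : f.coeff a ≠ 0) : IsLo f a :=
  ⟨ha, fun _ hk => hf.coeff_eq_zero (Or.inl hk)⟩

end LaurentPolynomial

theorem IsHi.add_of_supportedIn {f g : ℤ[T;T⁻¹]} {b c d : ℤ} (hf : IsHi f b)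
    (hg : SupportedIn g c d) (hdb : d < b) : IsHi (f + g) b := by
  obtain ⟨hb, hvan⟩ := hf
  simp only [IsHi, coeffA, AddMonoidAlgebra.coeff_add, Finsupp.add_apply] at hb hvan ⊢
  refine ⟨?_, fun k hk => ?_⟩
  · rwa [hg.coeff_eq_zero (Or.inr hdb), add_zero]
  · rw [hvan k hk, hg.coeff_eq_zero (Or.inr (hdb.trans hk)), add_zero]

theorem IsLo.add_of_supportedIn {f g : ℤ[T;T⁻¹]} {a c d : ℤ} (hf : IsLo f a)
    (hg : SupportedIn g c d) (hac : a < c) : IsLo (f + g) a := by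
  obtain ⟨ha, hvan⟩ := hf
  simp only [IsLo, coeffA, AddMonoidAlgebra.coeff_add, Finsupp.add_apply] at ha hvan ⊢
  refine ⟨?_, fun k hk => ?_⟩
  · rwa [hg.coeff_eq_zero (Or.inl hac), add_zero]
  · rw [hvan k hk, hg.coeff_eq_zero (Or.inl (hk.trans hac)), add_zero]

theorem supportedIn_Q {m : ℕ} (hm : 1 ≤ m) : SupportedIn (Q m) (-m - 2) (3 * m - 2) := by
  refine ((supportedIn_T _).neg.add (SupportedIn.sum (a := -m - 2) (b := 3 * m - 2)
    fun k hk => ?_)).mono (by omega) (by omega)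
  have := mem_range.mp hk
  exact (supportedIn_neg_one_pow_mul_T _ _).mono (by omega) (by omega)

theorem supportedIn_Rm_sum (m : ℕ) :
    SupportedIn ((T 4 + T (-4)) *
      ∑ k ∈ Icc 1 (m - 1), (-1 : ℤ[T;T⁻¹]) ^ k * T (4 * (k : ℤ) - m - 1)) (-1 - m) (3 * m - 1) := by
  refine ((supportedIn_T_add_T_neg (by norm_num)).mul
    (SupportedIn.sum (a := 3 - m) (b := 3 * m - 5) fun k hk => ?_)).mono (by omega) (by omega)
  have := mem_Icc.mp hk
  exact (supportedIn_neg_one_pow_mul_T _ _).mono (by omega) (by omega)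

theorem supportedIn_Rm (m : ℕ) : SupportedIn (Rm m) (-m - 5) (3 * m - 1) :=
  ((supportedIn_T _).add (supportedIn_Rm_sum m)).mono (by omega) (by omega)

theorem coeff_Rm_lowest (m : ℕ) : (Rm m).coeff (-m - 5) = 1 := by
  rw [Rm, AddMonoidAlgebra.coeff_add, Finsupp.add_apply, (supportedIn_Rm_sum m).coeff_eq_zero
    (by omega), T_apply, if_pos rfl, add_zero]

/-- for m ≥ 2, W(m) = (−A⁶−A⁻⁶)·N(m) + (−A⁴−A⁻⁴+2)·A⁻⁶·R(m)
has h = 3m+12, ℓ = −m−15, span 4m+27 > 16. -/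
theorem stmt_7 (m : ℕ) (hm : 2 ≤ m)
    (W : LaurentPolynomial ℤ)
    (hW : W = (-T 6 - T (-6)) * N m + (-T 4 - T (-4) + 2) * T (-6) * Rm m) :
    IsHi W (3*(m:ℤ) + 12) ∧ IsLo W (-(m:ℤ) - 15) ∧
    (3*(m:ℤ) + 12) - (-(m:ℤ) - 15) = 4*(m:ℤ) + 27 ∧
    4*(m:ℤ) + 27 > 16 := by
  have hD := supportedIn_neg_T_sub_T_neg (R := ℤ) (n := 6) (by norm_num)
  have hF := supportedIn_neg_T_sub_T_neg_add_two (R := ℤ) (n := 4) (by norm_num)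
  have hP : SupportedIn ((-T 3) ^ m : ℤ[T;T⁻¹]) (m * 3) (m * 3) := (supportedIn_T 3).neg.pow m
  have hX := hD.mul (hD.mul hP)
  have hY := hD.mul (hF.mul (supportedIn_Q (by omega : 1 ≤ m)))
  have hZ := (hF.mul (supportedIn_T (-6))).mul (supportedIn_Rm m)
  subst hW
  rw [N, mul_add]
  refine ⟨?_, ?_, by ring, by omega⟩
  · rw [add_assoc, show 3 * (m : ℤ) + 12 = 6 + (6 + m * 3) by ring]
    refine (hX.isHi ?_).add_of_supportedIn (hY.add hZ) (by omega)
    rw [hD.coeff_mul_top (hD.mul hP), hD.coeff_mul_top hP, (supportedIn_T 3).neg.coeff_pow_top]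
    simp [AddMonoidAlgebra.coeff_sub]
  · rw [add_comm, show -(m : ℤ) - 15 = -4 + -6 + (-m - 5) by ring]
    refine (hZ.isLo ?_).add_of_supportedIn (hX.add hY) (by omega)
    rw [(hF.mul (supportedIn_T (-6))).coeff_mul_bot (supportedIn_Rm m),
      hF.coeff_mul_bot (supportedIn_T (-6)), coeff_Rm_lowest]
    simp [AddMonoidAlgebra.coeff_sub]
end

section
/- Let n, m be integers with m > n > 0 and set W(n,m) = (−A⁶−A⁻⁶)·N(n+m) + (−A⁴−A⁻⁴+2)·P(n)·R(m) in ℤ[A, A⁻¹]. Then h(W(n,m)) = 3(n+m)+12 and ℓ(W(n,m)) = −(n+m)−15, so that span(W(n,m)) = 4(n+m)+27; in particular span(W(n,m)) > 16. -/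
/-!
No cancellation ever happens at the extremes: in every sum one summand strictly dominates at the
top (resp. bottom), and over `ℤ` the extreme coefficients of a product are the products of those of
the factors. So `h` and `ℓ` of each building block can be read off term by term. The bottom
exponent is the top exponent after `A ↦ A⁻¹` (`LaurentPolynomial.invert`), which reduces every
statement about `ℓ` to one about `h`; the small factors `A^a + A^{-a}`, `-A^a - A^{-a}` and
`-A^a - A^{-a} + 2` are invariant under this involution.
-/

open LaurentPolynomial Finset

namespace LaurentPolynomial

variable {R : Type*} [Semiring R] {y z : R[T;T⁻¹]} {d e : ℤ}

theorem coeff_mul_add_of_forall_gt (hy : ∀ k, d < k → y.coeff k = 0)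
    (hz : ∀ k, e < k → z.coeff k = 0) :
    (y * z).coeff (d + e) = y.coeff d * z.coeff e := by
  classical
  rw [AddMonoidAlgebra.coeff_mul, Finsupp.sum, Finset.sum_eq_single d, Finsupp.sum,
    Finset.sum_eq_single e, if_pos rfl]
  · intro b _ hb
    rcases lt_or_gt_of_ne hb with hb | hb
    · exact if_neg (by omega)
    · simp [hz b hb]
  · intro he
    simp [Finsupp.notMem_support_iff.1 he]
  · intro a _ ha
    refine Finset.sum_eq_zero fun b _ => ?_
    rcases lt_or_gt_of_ne ha with ha | ha
    · rcases le_or_gt b e with hb | hb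
      · exact if_neg (by omega)
      · simp [hz b hb]
    · simp [hy a ha]
  · intro hd
    simp [Finsupp.notMem_support_iff.1 hd]

theorem coeff_mul_eq_zero_of_forall_gt (hy : ∀ k, d < k → y.coeff k = 0)
    (hz : ∀ k, e < k → z.coeff k = 0) {k : ℤ} (hk : d + e < k) : (y * z).coeff k = 0 := by
  classical
  by_contra hne
  obtain ⟨a, ha, b, hb, rfl⟩ :=
    Finset.mem_add.1 (AddMonoidAlgebra.support_coeff_mul_subset y z (Finsupp.mem_support_iff.2 hne))
  have had : a ≤ d := not_lt.1 fun h => Finsupp.mem_support_iff.1 ha (hy a h)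
  have hbe : b ≤ e := not_lt.1 fun h => Finsupp.mem_support_iff.1 hb (hz b h)
  omega

end LaurentPolynomial

section Extremes

variable {y z : LaurentPolynomial ℤ} {d e : ℤ}

theorem isHi_T (a : ℤ) : IsHi (T a) a :=
  ⟨by simp [coeffA], fun k hk => by simp [coeffA]; omega⟩

theorem IsHi.mul (hy : IsHi y d) (hz : IsHi z e) : IsHi (y * z) (d + e) :=
  ⟨by rw [coeffA, coeff_mul_add_of_forall_gt hy.2 hz.2]; exact mul_ne_zero hy.1 hz.1,
    fun _ => coeff_mul_eq_zero_of_forall_gt hy.2 hz.2⟩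

theorem IsHi.pow (hy : IsHi y d) (j : ℕ) : IsHi (y ^ j) (j * d) := by
  induction j with
  | zero => simpa only [pow_zero, Nat.cast_zero, zero_mul, T_zero] using isHi_T 0
  | succ j ih => simpa [pow_succ, add_mul] using ih.mul hy

theorem IsHi.neg (hy : IsHi y d) : IsHi (-y) d := by
  unfold IsHi coeffA at *
  simpa using hy

theorem IsHi.add_left (hy : IsHi y d) (hz : IsHi z e) (h : e < d) : IsHi (y + z) d := by
  unfold IsHi coeffA at *
  refine ⟨?_, fun k hk => ?_⟩
  · simpa [hz.2 d h] using hy.1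
  · simp [hy.2 k hk, hz.2 k (h.trans hk)]

theorem IsHi.add_right (hy : IsHi y e) (hz : IsHi z d) (h : e < d) : IsHi (y + z) d :=
  add_comm z y ▸ hz.add_left hy h

theorem IsHi.sub_left (hy : IsHi y d) (hz : IsHi z e) (h : e < d) : IsHi (y - z) d :=
  sub_eq_add_neg y z ▸ hy.add_left hz.neg h

theorem isHi_sum {ι : Type*} {s : Finset ι} {f : ι → LaurentPolynomial ℤ} {g : ι → ℤ} {i₀ : ι}
    (hi₀ : i₀ ∈ s) (hf : ∀ i ∈ s, IsHi (f i) (g i)) (hg : ∀ i ∈ s, i ≠ i₀ → g i < g i₀) :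
    IsHi (∑ i ∈ s, f i) (g i₀) := by
  unfold IsHi coeffA at *
  simp only [AddMonoidAlgebra.coeff_sum, Finset.sum_apply']
  refine ⟨?_, fun k hk => Finset.sum_eq_zero fun i hi => ?_⟩
  · rw [Finset.sum_eq_single_of_mem i₀ hi₀ fun i hi hne => (hf i hi).2 _ (hg i hi hne)]
    exact (hf i₀ hi₀).1
  · obtain rfl | hne := eq_or_ne i i₀
    · exact (hf i hi).2 k hk
    · exact (hf i hi).2 k ((hg i hi hne).trans hk)

theorem isHi_C {r : ℤ} (hr : r ≠ 0) : IsHi (C r) 0 :=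
  ⟨by simpa only [coeffA, C_apply, if_pos rfl],
    fun _ hk => by simp only [coeffA, C_apply, if_neg hk.ne']⟩

theorem isHi_neg_one_pow_mul_T (p : ℕ) (a : ℤ) : IsHi ((-1) ^ p * T a) a := by
  simpa using (((isHi_T 0).neg.pow p).mul (isHi_T a))

theorem isLo_iff_isHi_invert : IsLo y d ↔ IsHi (invert y) (-d) := by
  simp only [IsLo, IsHi, coeffA, invert_apply, neg_neg]
  refine and_congr_right' ((Equiv.neg ℤ).forall_congr fun k => ?_)
  simp

theorem IsHi.isLo_of_invert_eq (hy : IsHi y d) (hinv : invert y = y) : IsLo y (-d) :=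
  isLo_iff_isHi_invert.2 (by rwa [hinv, neg_neg])

theorem IsLo.mul (hy : IsLo y d) (hz : IsLo z e) : IsLo (y * z) (d + e) := by
  rw [isLo_iff_isHi_invert] at *
  rw [map_mul, neg_add]
  exact hy.mul hz

theorem IsLo.pow (hy : IsLo y d) (j : ℕ) : IsLo (y ^ j) (j * d) := by
  rw [isLo_iff_isHi_invert] at *
  rw [map_pow, ← mul_neg]
  exact hy.pow j

theorem IsLo.neg (hy : IsLo y d) : IsLo (-y) d := by
  rw [isLo_iff_isHi_invert] at *
  rw [map_neg]
  exact hy.neg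

theorem IsLo.add_left (hy : IsLo y d) (hz : IsLo z e) (h : d < e) : IsLo (y + z) d := by
  rw [isLo_iff_isHi_invert] at *
  rw [map_add]
  exact hy.add_left hz (neg_lt_neg h)

theorem IsLo.add_right (hy : IsLo y e) (hz : IsLo z d) (h : d < e) : IsLo (y + z) d :=
  add_comm z y ▸ hz.add_left hy h

theorem isLo_sum {ι : Type*} {s : Finset ι} {f : ι → LaurentPolynomial ℤ} {g : ι → ℤ} {i₀ : ι}
    (hi₀ : i₀ ∈ s) (hf : ∀ i ∈ s, IsLo (f i) (g i)) (hg : ∀ i ∈ s, i ≠ i₀ → g i₀ < g i) :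
    IsLo (∑ i ∈ s, f i) (g i₀) := by
  rw [isLo_iff_isHi_invert, map_sum]
  exact isHi_sum (g := fun i => -g i) hi₀ (fun i hi => isLo_iff_isHi_invert.1 (hf i hi))
    fun i hi hne => neg_lt_neg (hg i hi hne)

theorem isLo_T (a : ℤ) : IsLo (T a) a :=
  isLo_iff_isHi_invert.2 (by simpa using isHi_T (-a))

theorem isLo_neg_one_pow_mul_T (p : ℕ) (a : ℤ) : IsLo ((-1) ^ p * T a) a :=
  isLo_iff_isHi_invert.2 (by simpa using isHi_neg_one_pow_mul_T p (-a))

end Extremes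

section Components

variable {a : ℤ}

theorem isHi_sum_neg_one_pow_mul_T {ι : Type*} {s : Finset ι} {p : ι → ℕ} {g : ι → ℤ} {i₀ : ι}
    (hi₀ : i₀ ∈ s) (hg : ∀ i ∈ s, i ≠ i₀ → g i < g i₀) :
    IsHi (∑ i ∈ s, (-1) ^ p i * T (g i)) (g i₀) :=
  isHi_sum hi₀ (fun i _ => isHi_neg_one_pow_mul_T (p i) (g i)) hg

theorem isLo_sum_neg_one_pow_mul_T {ι : Type*} {s : Finset ι} {p : ι → ℕ} {g : ι → ℤ} {i₀ : ι}
    (hi₀ : i₀ ∈ s) (hg : ∀ i ∈ s, i ≠ i₀ → g i₀ < g i) :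
    IsLo (∑ i ∈ s, (-1) ^ p i * T (g i)) (g i₀) :=
  isLo_sum hi₀ (fun i _ => isLo_neg_one_pow_mul_T (p i) (g i)) hg

theorem isHi_T_add_T_neg (ha : 0 < a) : IsHi (T a + T (-a)) a :=
  (isHi_T a).add_left (isHi_T (-a)) (by omega)

theorem isLo_T_add_T_neg (ha : 0 < a) : IsLo (T a + T (-a)) (-a) :=
  (isHi_T_add_T_neg ha).isLo_of_invert_eq (by simp [add_comm])

theorem isHi_neg_T_sub_T_neg (ha : 0 < a) : IsHi (-T a - T (-a)) a :=
  (isHi_T a).neg.sub_left (isHi_T (-a)) (by omega)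

theorem isLo_neg_T_sub_T_neg (ha : 0 < a) : IsLo (-T a - T (-a)) (-a) :=
  (isHi_neg_T_sub_T_neg ha).isLo_of_invert_eq (by simp [sub_eq_add_neg, add_comm])

theorem isHi_neg_T_sub_T_neg_add_two (ha : 0 < a) : IsHi (-T a - T (-a) + 2) a :=
  (isHi_neg_T_sub_T_neg ha).add_left (isHi_C two_ne_zero) ha

theorem isLo_neg_T_sub_T_neg_add_two (ha : 0 < a) : IsLo (-T a - T (-a) + 2) (-a) :=
  (isHi_neg_T_sub_T_neg_add_two ha).isLo_of_invert_eq
    (by simp [sub_eq_add_neg, add_comm, map_ofNat])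

theorem isHi_P {n : ℕ} (hn : 0 < n) : IsHi (P n) (3 * n + 2) := by
  have hS := isHi_sum_neg_one_pow_mul_T (s := Icc 1 n) (p := fun k => k)
    (g := fun k : ℕ => 4 * (k : ℤ) - n - 2) (mem_Icc.2 ⟨hn, le_rfl⟩)
    fun k hk _ => by simp only [mem_Icc] at hk; omega
  unfold P
  convert (isHi_T (-(n : ℤ) - 6)).add_right ((isHi_T_add_T_neg four_pos).mul hS) (by omega) using 1
  ring

theorem isLo_P {n : ℕ} (hn : 0 < n) : IsLo (P n) (-n - 6) := by
  have hS := isLo_sum_neg_one_pow_mul_T (s := Icc 1 n) (p := fun k => k)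
    (g := fun k : ℕ => 4 * (k : ℤ) - n - 2) (mem_Icc.2 ⟨le_rfl, hn⟩)
    fun k hk hne => by simp only [mem_Icc] at hk; omega
  exact (isLo_T _).add_left ((isLo_T_add_T_neg four_pos).mul hS) (by omega)

theorem isHi_Rm {m : ℕ} (hm : 2 ≤ m) : IsHi (Rm m) (3 * m - 1) := by
  have hS := isHi_sum_neg_one_pow_mul_T (s := Icc 1 (m - 1)) (p := fun k => k)
    (g := fun k : ℕ => 4 * (k : ℤ) - m - 1) (mem_Icc.2 ⟨by omega, le_rfl⟩)
    fun k hk _ => by simp only [mem_Icc] at hk; omega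
  unfold Rm
  convert (isHi_T (-(m : ℤ) - 5)).add_right ((isHi_T_add_T_neg four_pos).mul hS) (by omega)
    using 1
  omega

theorem isLo_Rm {m : ℕ} (hm : 2 ≤ m) : IsLo (Rm m) (-m - 5) := by
  have hS := isLo_sum_neg_one_pow_mul_T (s := Icc 1 (m - 1)) (p := fun k => k)
    (g := fun k : ℕ => 4 * (k : ℤ) - m - 1) (mem_Icc.2 ⟨le_rfl, by omega⟩)
    fun k hk hne => by simp only [mem_Icc] at hk; omega
  exact (isLo_T _).add_left ((isLo_T_add_T_neg four_pos).mul hS) (by omega)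

theorem isHi_Q {j : ℕ} (hj : 2 ≤ j) : IsHi (Q j) (3 * j - 2) := by
  have hS := isHi_sum_neg_one_pow_mul_T (s := range (j + 1)) (p := fun k => k + 1)
    (g := fun k : ℕ => 4 * (k : ℤ) - j - 2) (self_mem_range_succ j)
    fun k hk hne => by simp only [mem_range] at hk; omega
  unfold Q
  convert (isHi_T (2 - (j : ℤ))).neg.add_right hS (by omega) using 1
  ring

theorem isLo_Q (j : ℕ) : IsLo (Q j) (-j - 2) := by
  have hS := isLo_sum_neg_one_pow_mul_T (s := range (j + 1)) (p := fun k => k + 1)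
    (g := fun k : ℕ => 4 * (k : ℤ) - j - 2) (mem_range.2 j.succ_pos)
    fun k _ hne => by omega
  unfold Q
  convert (isLo_T (2 - (j : ℤ))).neg.add_right hS (by omega) using 1
  ring

theorem isHi_N {j : ℕ} (hj : 2 ≤ j) : IsHi (N j) (3 * j + 6) := by
  unfold N
  convert ((isHi_neg_T_sub_T_neg (a := 6) (by norm_num)).mul ((isHi_T 3).neg.pow j)).add_left
    ((isHi_neg_T_sub_T_neg_add_two four_pos).mul (isHi_Q hj)) (by omega) using 1
  ring

theorem isLo_N {j : ℕ} (hj : 0 < j) : IsLo (N j) (-j - 6) := by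
  unfold N
  convert ((isLo_neg_T_sub_T_neg (a := 6) (by norm_num)).mul ((isLo_T 3).neg.pow j)).add_right
    ((isLo_neg_T_sub_T_neg_add_two four_pos).mul (isLo_Q j)) (by omega) using 1
  ring

end Components

/-- for m > n > 0, W(n,m) = (−A⁶−A⁻⁶)·N(n+m) + (−A⁴−A⁻⁴+2)·P(n)·R(m)
has h = 3(n+m)+12, ℓ = −(n+m)−15, span 4(n+m)+27 > 16. -/
theorem stmt_8 (n m : ℕ) (hn : 0 < n) (hm : n < m)
    (W : LaurentPolynomial ℤ)
    (hW : W = (-T 6 - T (-6)) * N (n + m) + (-T 4 - T (-4) + 2) * (P n * Rm m)) :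
    IsHi W (3*((n:ℤ) + m) + 12) ∧ IsLo W (-((n:ℤ) + m) - 15) ∧
    (3*((n:ℤ) + m) + 12) - (-((n:ℤ) + m) - 15) = 4*((n:ℤ) + m) + 27 ∧
    4*((n:ℤ) + m) + 27 > 16 := by
  subst hW
  have hm2 : 2 ≤ m := by omega
  refine ⟨?_, ?_, by ring, by omega⟩
  · convert ((isHi_neg_T_sub_T_neg (a := 6) (by norm_num)).mul
      (isHi_N (j := n + m) (by omega))).add_left
      ((isHi_neg_T_sub_T_neg_add_two four_pos).mul ((isHi_P hn).mul (isHi_Rm hm2)))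
      (by push_cast; omega) using 1
    push_cast; ring
  · convert ((isLo_neg_T_sub_T_neg (a := 6) (by norm_num)).mul
      (isLo_N (j := n + m) (by omega))).add_right
      ((isLo_neg_T_sub_T_neg_add_two four_pos).mul ((isLo_P hn).mul (isLo_Rm hm2)))
      (by push_cast; omega) using 1
    ring
end
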